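/- Let b ∈ ℝⁿ, c ∈ ℝ^m, and let D ∈ ℝ^{m×n} be a surjective matrix, and consider the problem: minimize F(x) := (1/2)‖b − x‖₂² + γ T_{K,m,1}(Dx − c) over x ∈ ℝⁿ, with γ > 0 and K ∈ {0, …, m−1}. Let x̄ be any point with Dx̄ = c. If γ > ‖b − x̄‖₂ / σ_min(D), where σ_min(D) is the smallest singular value of D (which is positive since D is surjective), then every d-stationary point x* of this problem satisfies T_{K,m,1}(Dx* − c) = 0, i.e., Dx* − c has at most K nonzero entries. -/

import Mathlib

open Filter Topology Matrix

/-- `f` has one-sided directional derivative `L` at `x` in direction `d`. -/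
def HasDDerivAt {E : Type*} [AddCommMonoid E] [SMul ℝ E] (f : E → ℝ) (x d : E) (L : ℝ) :
    Prop :=
  Tendsto (fun ς : ℝ => (f (x + ς • d) - f x) / ς) (nhdsWithin 0 (Set.Ioi 0)) (nhds L)

/-- The trimmed ℓ₁ norm `T_{K,m,1}`: the sum of the `m − K` smallest absolute entries. -/
noncomputable def trimmed1 {m : ℕ} (K : ℕ) (v : Fin m → ℝ) : ℝ :=
  sInf {s : ℝ | ∃ Λ : Finset (Fin m), Λ.card = m - K ∧ s = ∑ i ∈ Λ, |v i|}

/-- ℓ₂ norm of a vector. -/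
noncomputable def l2 {k : ℕ} (v : Fin k → ℝ) : ℝ := Real.sqrt (∑ j, v j ^ 2)

/-- The number of nonzero entries `‖v‖₀`. -/
noncomputable def l0 {k : ℕ} (v : Fin k → ℝ) : ℕ :=
  (Finset.univ.filter fun i => v i ≠ 0).card

/-- The smallest singular value of a (surjective) matrix `D`: the square root of the
smallest eigenvalue of `D * Dᵀ`. -/
noncomputable def sigmaMinFull {m n : ℕ} (D : Matrix (Fin m) (Fin n) ℝ) : ℝ :=
  sInf {σ : ℝ | 0 ≤ σ ∧ ∃ v : Fin m → ℝ, v ≠ 0 ∧ (D * Dᵀ).mulVec v = (σ ^ 2) • v}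


lemma trimmed1_set_eq {m K : ℕ} (v : Fin m → ℝ) :
    {s : ℝ | ∃ Λ : Finset (Fin m), Λ.card = m - K ∧ s = ∑ i ∈ Λ, |v i|} =
      ↑((Finset.univ.powersetCard (m - K)).image fun Λ => ∑ i ∈ Λ, |v i|) := by
  ext s
  simp [Finset.mem_powersetCard_univ, eq_comm]

lemma trimmed1_le_sum {m K : ℕ} (v : Fin m → ℝ) (Λ : Finset (Fin m))
    (hΛ : Λ.card = m - K) : trimmed1 K v ≤ ∑ i ∈ Λ, |v i| := by
  apply csInf_le
  · rw [trimmed1_set_eq]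
    exact (Finset.finite_toSet _).bddBelow
  · exact ⟨Λ, hΛ, rfl⟩

lemma trimmed1_exists_min {m K : ℕ} (hK : K < m) (v : Fin m → ℝ) :
    ∃ Λ : Finset (Fin m), Λ.card = m - K ∧ trimmed1 K v = ∑ i ∈ Λ, |v i| := by
  have hne : {s : ℝ | ∃ Λ : Finset (Fin m), Λ.card = m - K ∧ s = ∑ i ∈ Λ, |v i|}.Nonempty := by
    obtain ⟨Λ, hΛ⟩ := (Finset.powersetCard_nonempty (s := (Finset.univ : Finset (Fin m)))
      (n := m - K)).2 (by simp)
    exact ⟨∑ i ∈ Λ, |v i|, Λ, (Finset.mem_powersetCard_univ).1 hΛ, rfl⟩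
  have hfin : {s : ℝ | ∃ Λ : Finset (Fin m), Λ.card = m - K ∧ s = ∑ i ∈ Λ, |v i|}.Finite := by
    rw [trimmed1_set_eq]; exact Finset.finite_toSet _
  have := hne.csInf_mem hfin
  obtain ⟨Λ, hΛ, hval⟩ := this
  exact ⟨Λ, hΛ, hval⟩

lemma trimmed1_nonneg {m K : ℕ} (hK : K < m) (v : Fin m → ℝ) : 0 ≤ trimmed1 K v := by
  obtain ⟨Λ, _, hval⟩ := trimmed1_exists_min hK v
  rw [hval]
  exact Finset.sum_nonneg fun i _ => abs_nonneg _

lemma trimmed1_smul {m K : ℕ} (hK : K < m) (t : ℝ) (ht : 0 ≤ t) (v : Fin m → ℝ) :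
    trimmed1 K (fun i => t * v i) = t * trimmed1 K v := by
  apply le_antisymm
  · obtain ⟨Λ, hΛ, hval⟩ := trimmed1_exists_min hK v
    calc trimmed1 K (fun i => t * v i) ≤ ∑ i ∈ Λ, |t * v i| := trimmed1_le_sum _ Λ hΛ
    _ = t * ∑ i ∈ Λ, |v i| := by
        rw [Finset.mul_sum]
        exact Finset.sum_congr rfl fun i _ => by rw [abs_mul, abs_of_nonneg ht]
    _ = t * trimmed1 K v := by rw [hval]
  · obtain ⟨Λ, hΛ, hval⟩ := trimmed1_exists_min hK (fun i => t * v i)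
    calc t * trimmed1 K v ≤ t * ∑ i ∈ Λ, |v i| :=
          mul_le_mul_of_nonneg_left (trimmed1_le_sum v Λ hΛ) ht
    _ = ∑ i ∈ Λ, |t * v i| := by
        rw [Finset.mul_sum]
        exact Finset.sum_congr rfl fun i _ => by rw [abs_mul, abs_of_nonneg ht]
    _ = trimmed1 K (fun i => t * v i) := hval.symm

lemma trimmed1_shrink {m K : ℕ} (hK : K < m) (v : Fin m → ℝ) (Λ : Finset (Fin m))
    (hΛ : Λ.card = m - K) (hval : trimmed1 K v = ∑ i ∈ Λ, |v i|)
    (ς : ℝ) (h0 : 0 ≤ ς) (h1 : ς ≤ 1) :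
    trimmed1 K (fun i => v i - ς * (if i ∈ Λ then v i else 0)) =
      (1 - ς) * trimmed1 K v := by
  set w : Fin m → ℝ := fun i => v i - ς * (if i ∈ Λ then v i else 0) with hw
  have hwΛ : ∀ i ∈ Λ, |w i| = (1 - ς) * |v i| := by
    intro i hi
    simp only [hw, if_pos hi]
    rw [show v i - ς * v i = (1 - ς) * v i by ring, abs_mul, abs_of_nonneg (by linarith)]
  have hwnΛ : ∀ i, i ∉ Λ → |w i| = |v i| := by
    intro i hi; simp [hw, if_neg hi]
  apply le_antisymm
  · calc trimmed1 K w ≤ ∑ i ∈ Λ, |w i| := trimmed1_le_sum _ Λ hΛ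
    _ = (1 - ς) * ∑ i ∈ Λ, |v i| := by
        rw [Finset.mul_sum]; exact Finset.sum_congr rfl fun i hi => hwΛ i hi
    _ = (1 - ς) * trimmed1 K v := by rw [hval]
  · obtain ⟨Λ', hΛ', hval'⟩ := trimmed1_exists_min hK w
    rw [hval']
    have hsplit : ∑ i ∈ Λ', |w i| = ∑ i ∈ Λ' ∩ Λ, |w i| + ∑ i ∈ Λ' \ Λ, |w i| :=
      (Finset.sum_inter_add_sum_sdiff _ _ _).symm
    have h1' : ∑ i ∈ Λ' ∩ Λ, |w i| = (1 - ς) * ∑ i ∈ Λ' ∩ Λ, |v i| := by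
      rw [Finset.mul_sum]
      exact Finset.sum_congr rfl fun i hi => hwΛ i (Finset.mem_inter.1 hi).2
    have h2' : ∑ i ∈ Λ' \ Λ, |w i| = ∑ i ∈ Λ' \ Λ, |v i| :=
      Finset.sum_congr rfl fun i hi => hwnΛ i (Finset.mem_sdiff.1 hi).2
    have hvsplit : ∑ i ∈ Λ' ∩ Λ, |v i| + ∑ i ∈ Λ' \ Λ, |v i| = ∑ i ∈ Λ', |v i| :=
      Finset.sum_inter_add_sum_sdiff _ _ _
    have hlow : trimmed1 K v ≤ ∑ i ∈ Λ', |v i| := trimmed1_le_sum v Λ' hΛ'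
    have ha : ∑ i ∈ Λ' ∩ Λ, |v i| ≤ trimmed1 K v := by
      rw [hval]
      exact Finset.sum_le_sum_of_subset_of_nonneg Finset.inter_subset_right
        fun i _ _ => abs_nonneg _
    have hanneg : (0:ℝ) ≤ ∑ i ∈ Λ' ∩ Λ, |v i| :=
      Finset.sum_nonneg fun i _ => abs_nonneg _
    nlinarith [hsplit, h1', h2']

lemma sigma_bound {m n : ℕ} (hm : 0 < m) (D : Matrix (Fin m) (Fin n) ℝ)
    (hD : Function.Surjective D.mulVec) :
    0 < sigmaMinFull D ∧ IsUnit (D * Dᵀ).det ∧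
      ∀ w : Fin m → ℝ, sigmaMinFull D ^ 2 * (w ⬝ᵥ w) ≤ w ⬝ᵥ (D * Dᵀ).mulVec w := by
  haveI : NeZero m := ⟨hm.ne'⟩
  set A := D * Dᵀ with hAdef
  have hA : A.IsHermitian := by
    have := Matrix.isHermitian_mul_conjTranspose_self D
    rwa [Matrix.conjTranspose_eq_transpose_of_trivial] at this
  have hquad : ∀ x : Fin m → ℝ, x ⬝ᵥ A.mulVec x = (x ᵥ* D) ⬝ᵥ (x ᵥ* D) := by
    intro x
    rw [hAdef, ← Matrix.mulVec_mulVec, Matrix.dotProduct_mulVec, Matrix.mulVec_transpose]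
  have hPD : A.PosDef := by
    refine Matrix.PosDef.of_dotProduct_mulVec_pos hA fun x hx => ?_
    have h1 : star x = x := by simp
    rw [h1, hquad]
    rcases eq_or_ne (x ᵥ* D) 0 with h | h
    · exfalso
      apply hx
      obtain ⟨y, hy⟩ := hD x
      have : x ⬝ᵥ x = 0 := by
        calc x ⬝ᵥ x = x ⬝ᵥ (D *ᵥ y) := by rw [hy]
        _ = (x ᵥ* D) ⬝ᵥ y := Matrix.dotProduct_mulVec x D y
        _ = 0 := by rw [h, zero_dotProduct]
      exact (dotProduct_self_eq_zero).1 this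
    · have := dotProduct_self_eq_zero (v := x ᵥ* D)
      have hnn : (0:ℝ) ≤ (x ᵥ* D) ⬝ᵥ (x ᵥ* D) :=
        Finset.sum_nonneg fun i _ => mul_self_nonneg _
      rcases lt_or_eq_of_le hnn with h' | h'
      · exact h'
      · exact absurd (dotProduct_self_eq_zero.1 h'.symm) h
  have hdet : IsUnit A.det := by
    have := hPD.det_pos
    exact isUnit_iff_ne_zero.2 this.ne'
  -- eigenvalues
  set μ := hA.eigenvalues with hμ
  have hμpos : ∀ j, 0 < μ j := fun j => hPD.eigenvalues_pos j
  obtain ⟨j₀, _, hj₀⟩ := Finset.exists_min_image Finset.univ μ ⟨⟨0, hm⟩, Finset.mem_univ _⟩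
  -- Rayleigh lower bound
  have hray : ∀ w : Fin m → ℝ, μ j₀ * (w ⬝ᵥ w) ≤ w ⬝ᵥ A.mulVec w := by
    intro w
    set U : Matrix (Fin m) (Fin m) ℝ := ↑hA.eigenvectorUnitary with hU
    have hUmem : U ∈ Matrix.unitaryGroup (Fin m) ℝ := hA.eigenvectorUnitary.2
    have hUU : U * star U = 1 := (Matrix.mem_unitaryGroup_iff).1 hUmem
    have hstarU : star U = Uᵀ := by
      ext i j
      simp [Matrix.star_eq_conjTranspose, Matrix.conjTranspose_apply]
    have hdiag : Matrix.diagonal (RCLike.ofReal ∘ μ) = Matrix.diagonal μ := by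
      ext i j
      by_cases h : i = j <;> simp [Matrix.diagonal, h]
    have hspec : A = U * Matrix.diagonal μ * Uᵀ := by
      have := hA.spectral_theorem
      rw [Unitary.conjStarAlgAut_apply, hdiag, ← hU, hstarU] at this
      exact this
    set y : Fin m → ℝ := Uᵀ *ᵥ w with hy
    have hcl1 : w ⬝ᵥ A.mulVec w = ∑ i, μ i * (y i)^2 := by
      rw [hspec]
      rw [← Matrix.mulVec_mulVec, ← Matrix.mulVec_mulVec]
      rw [Matrix.dotProduct_mulVec w U, ← Matrix.mulVec_transpose]
      rw [← hy]
      simp [dotProduct, Matrix.mulVec_diagonal]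
      exact Finset.sum_congr rfl fun i _ => by ring
    have hcl2 : w ⬝ᵥ w = y ⬝ᵥ y := by
      have : y ⬝ᵥ y = w ⬝ᵥ ((U * Uᵀ) *ᵥ w) := by
        rw [← Matrix.mulVec_mulVec, Matrix.dotProduct_mulVec w U, ← Matrix.mulVec_transpose]
      rw [this, ← hstarU, hUU, Matrix.one_mulVec]
    rw [hcl1, hcl2]
    have : μ j₀ * (y ⬝ᵥ y) = ∑ i, μ j₀ * (y i)^2 := by
      simp [dotProduct, Finset.mul_sum]
      exact Finset.sum_congr rfl fun i _ => by ring
    rw [this]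
    exact Finset.sum_le_sum fun i _ =>
      mul_le_mul_of_nonneg_right (hj₀ i (Finset.mem_univ i)) (sq_nonneg _)
  -- the sigma set
  set S : Set ℝ := {σ : ℝ | 0 ≤ σ ∧ ∃ v : Fin m → ℝ, v ≠ 0 ∧ (D * Dᵀ).mulVec v = (σ ^ 2) • v}
    with hS
  have hmem : ∀ j, Real.sqrt (μ j) ∈ S := by
    intro j
    refine ⟨Real.sqrt_nonneg _, (WithLp.equiv 2 _) (hA.eigenvectorBasis j), ?_, ?_⟩
    · have h0 : hA.eigenvectorBasis j ≠ 0 := hA.eigenvectorBasis.orthonormal.ne_zero j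
      simpa using h0
    · have := hA.mulVec_eigenvectorBasis j
      rw [Real.sq_sqrt (hμpos j).le]
      simpa using this
  have hlb : ∀ σ' ∈ S, Real.sqrt (μ j₀) ≤ σ' := by
    rintro σ' ⟨hσ'0, v, hv0, hveq⟩
    have hvv : 0 < v ⬝ᵥ v := by
      rcases lt_or_eq_of_le (Finset.sum_nonneg fun i (_ : i ∈ Finset.univ) =>
        mul_self_nonneg (v i)) with h | h
      · exact h
      · exact absurd (dotProduct_self_eq_zero.1 h.symm) hv0
    have h1 : μ j₀ * (v ⬝ᵥ v) ≤ σ' ^ 2 * (v ⬝ᵥ v) := by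
      have := hray v
      rw [hveq] at this
      simpa [dotProduct_smul, smul_eq_mul] using this
    have h2 : μ j₀ ≤ σ' ^ 2 := le_of_mul_le_mul_right (by linarith [h1]) hvv
    calc Real.sqrt (μ j₀) ≤ Real.sqrt (σ' ^ 2) := Real.sqrt_le_sqrt h2
    _ = σ' := by rw [Real.sqrt_sq hσ'0]
  have hbdd : BddBelow S := ⟨0, fun σ' h => h.1⟩
  have hσeq : sigmaMinFull D = Real.sqrt (μ j₀) := by
    apply le_antisymm
    · exact csInf_le hbdd (hmem j₀)
    · exact le_csInf ⟨_, hmem j₀⟩ hlb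
  refine ⟨?_, hdet, ?_⟩
  · rw [hσeq]
    exact Real.sqrt_pos.2 (hμpos j₀)
  · intro w
    have hsq : sigmaMinFull D ^ 2 = μ j₀ := by
      rw [hσeq, Real.sq_sqrt (hμpos j₀).le]
    rw [hsq]
    exact hray w

lemma hasDDeriv_of_quadratic {n : ℕ} (f : (Fin n → ℝ) → ℝ) (x d : Fin n → ℝ) (L Q : ℝ)
    (h : ∀ ς : ℝ, ς ∈ Set.Ioo (0:ℝ) 1 → f (x + ς • d) - f x = ς * L + ς^2 * Q) :
    HasDDerivAt f x d L := by
  unfold HasDDerivAt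
  have h1 : Tendsto (fun ς : ℝ => L + ς * Q) (nhdsWithin 0 (Set.Ioi 0)) (nhds L) := by
    have hc : Continuous fun ς : ℝ => L + ς * Q := by continuity
    have := hc.tendsto 0
    simp only [zero_mul, add_zero] at this
    exact tendsto_nhdsWithin_of_tendsto_nhds this
  apply h1.congr'
  have hmem : Set.Ioo (0:ℝ) 1 ∈ nhdsWithin (0:ℝ) (Set.Ioi 0) := by
    rw [show Set.Ioo (0:ℝ) 1 = Set.Ioi 0 ∩ Set.Iio 1 from rfl]
    exact Filter.inter_mem self_mem_nhdsWithin
      (mem_nhdsWithin_of_mem_nhds (Iio_mem_nhds one_pos))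
  filter_upwards [hmem] with ς hς
  rw [h ς hς, eq_div_iff hς.1.ne']
  ring

/-- Exact penalty for minimizing constraints violation. -/
theorem stmt14 {m n : ℕ} {K : ℕ} (hK : K < m)
    (γ : ℝ) (hγ : 0 < γ)
    (b : Fin n → ℝ) (c : Fin m → ℝ)
    (D : Matrix (Fin m) (Fin n) ℝ) (hD : Function.Surjective D.mulVec)
    (xbar : Fin n → ℝ) (hxbar : D.mulVec xbar = c)
    (F : (Fin n → ℝ) → ℝ)
    (hF : ∀ x, F x =
      (1 / 2) * ∑ i, (b i - x i) ^ 2 + γ * trimmed1 K (fun i => D.mulVec x i - c i))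
    (hthr : γ > l2 (fun i => b i - xbar i) / sigmaMinFull D)
    (xstar : Fin n → ℝ)
    -- x* is a d-stationary point of F
    (hstat : ∀ d, ∀ Ld : ℝ, HasDDerivAt F xstar d Ld → 0 ≤ Ld) :
    trimmed1 K (fun i => D.mulVec xstar i - c i) = 0 ∧
      l0 (fun i => D.mulVec xstar i - c i) ≤ K := by
  have hm : 0 < m := lt_of_le_of_lt (Nat.zero_le K) hK
  obtain ⟨hσpos, hdet, hray⟩ := sigma_bound hm D hD
  set σ : ℝ := sigmaMinFull D with hσ
  set z : Fin m → ℝ := fun i => D.mulVec xstar i - c i with hz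
  set T : ℝ := trimmed1 K z with hTdef
  obtain ⟨Λ, hΛcard, hΛval⟩ := trimmed1_exists_min hK z
  have hT0 : 0 ≤ T := trimmed1_nonneg hK z
  -- key consequence of d-stationarity
  have key : ∀ dv : Fin n → ℝ,
      (∀ ς : ℝ, ς ∈ Set.Ioo (0:ℝ) 1 →
        trimmed1 K (fun i => D.mulVec (xstar + ς • dv) i - c i) = (1 - ς) * T) →
      γ * T ≤ ∑ i, (xstar i - b i) * dv i := by
    intro dv htr
    have hdd : HasDDerivAt F xstar dv (∑ i, (xstar i - b i) * dv i - γ * T) := by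
      apply hasDDeriv_of_quadratic F xstar dv _ ((1/2) * ∑ i, (dv i)^2)
      intro ς hς
      rw [hF, hF, htr ς hς, show (fun i => D.mulVec xstar i - c i) = z from hz.symm,
        ← hTdef]
      have hsum : ∑ i, (b i - (xstar + ς • dv) i)^2
          = ∑ i, (b i - xstar i)^2 + ς * (2 * ∑ i, (xstar i - b i) * dv i)
            + ς^2 * ∑ i, (dv i)^2 := by
        rw [Finset.mul_sum, Finset.mul_sum, Finset.mul_sum, ← Finset.sum_add_distrib,
          ← Finset.sum_add_distrib]
        apply Finset.sum_congr rfl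
        intro i _
        simp only [Pi.add_apply, Pi.smul_apply, smul_eq_mul]
        ring
      rw [hsum]
      ring
    have := hstat dv _ hdd
    linarith
  -- direction 0 : xbar - xstar
  have htr0 : ∀ ς : ℝ, ς ∈ Set.Ioo (0:ℝ) 1 →
      trimmed1 K (fun i => D.mulVec (xstar + ς • (xbar - xstar)) i - c i) = (1 - ς) * T := by
    intro ς hς
    have harg : (fun i => D.mulVec (xstar + ς • (xbar - xstar)) i - c i)
        = fun i => (1 - ς) * z i := by
      funext i
      rw [Matrix.mulVec_add, Matrix.mulVec_smul, Matrix.mulVec_sub, hxbar]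
      simp only [Pi.add_apply, Pi.smul_apply, Pi.sub_apply, smul_eq_mul, hz]
      ring
    rw [harg, trimmed1_smul hK (1 - ς) (by linarith [hς.2]) z, ← hTdef]
  have hineq0 : γ * T ≤ ∑ i, (xstar i - b i) * (xbar i - xstar i) := by
    have := key (xbar - xstar) htr0
    simpa [Pi.sub_apply] using this
  -- direction 1 : least squares correction of small entries
  set u : Fin m → ℝ := fun i => if i ∈ Λ then z i else 0 with hu
  set wv : Fin m → ℝ := (D * Dᵀ)⁻¹.mulVec u with hwv
  set d1 : Fin n → ℝ := -(Dᵀ.mulVec wv) with hd1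
  have hAwv : (D * Dᵀ).mulVec wv = u := by
    rw [hwv, Matrix.mulVec_mulVec, Matrix.mul_nonsing_inv _ hdet, Matrix.one_mulVec]
  have hDd1 : D.mulVec d1 = -u := by
    rw [hd1, Matrix.mulVec_neg, Matrix.mulVec_mulVec, hAwv]
  have hineq1 : γ * T ≤ ∑ i, (xstar i - b i) * d1 i := by
    apply key
    intro ς hς
    have harg : (fun i => D.mulVec (xstar + ς • d1) i - c i)
        = fun i => z i - ς * (if i ∈ Λ then z i else 0) := by
      funext i
      rw [Matrix.mulVec_add, Matrix.mulVec_smul, hDd1]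
      simp only [Pi.add_apply, Pi.smul_apply, Pi.neg_apply, smul_eq_mul, hz, hu]
      ring
    rw [harg, trimmed1_shrink hK z Λ hΛcard hΛval ς hς.1.le hς.2.le, ← hTdef]
  -- abbreviations
  set P : ℝ := ∑ i, (b i - xstar i)^2 with hP
  set Pb : ℝ := ∑ i, (b i - xbar i)^2 with hPb
  have hP0 : 0 ≤ P := Finset.sum_nonneg fun i _ => sq_nonneg _
  have hPb0 : 0 ≤ Pb := Finset.sum_nonneg fun i _ => sq_nonneg _
  -- Step A : sqrt P ≤ sqrt Pb
  have hstepA : Real.sqrt P ≤ Real.sqrt Pb := by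
    have he1 : ∑ i, (xstar i - b i) * (xbar i - b i)
        = (∑ i, (xstar i - b i) * (xbar i - xstar i)) + P := by
      rw [hP, ← Finset.sum_add_distrib]
      exact Finset.sum_congr rfl fun i _ => by ring
    have hPle : P ≤ ∑ i, (xstar i - b i) * (xbar i - b i) := by
      rw [he1]; nlinarith [hineq0, mul_nonneg hγ.le hT0]
    have hcs := Finset.sum_mul_sq_le_sq_mul_sq Finset.univ
      (fun i => xstar i - b i) (fun i => xbar i - b i)
    have h1 : ∑ i, (xstar i - b i)^2 = P := by
      rw [hP]; exact Finset.sum_congr rfl fun i _ => by ring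
    have h2 : ∑ i, (xbar i - b i)^2 = Pb := by
      rw [hPb]; exact Finset.sum_congr rfl fun i _ => by ring
    rw [h1, h2] at hcs
    -- P^2 ≤ P * Pb
    have hPP : P^2 ≤ P * Pb := le_trans (by nlinarith [hPle]) hcs
    rcases eq_or_lt_of_le hP0 with h | h
    · rw [← h]; simp [Real.sqrt_nonneg]
    · have : P ≤ Pb := le_of_mul_le_mul_left (by nlinarith [hPP]) h
      exact Real.sqrt_le_sqrt this
  -- Step B : γ T ≤ sqrt P * sqrt Dq
  set Dq : ℝ := ∑ i, (d1 i)^2 with hDq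
  have hDq0 : 0 ≤ Dq := Finset.sum_nonneg fun i _ => sq_nonneg _
  have hstepB : γ * T ≤ Real.sqrt P * Real.sqrt Dq := by
    have hcs := Finset.sum_mul_sq_le_sq_mul_sq Finset.univ
      (fun i => xstar i - b i) d1
    have h1 : ∑ i, (xstar i - b i)^2 = P := by
      rw [hP]; exact Finset.sum_congr rfl fun i _ => by ring
    rw [h1, ← hDq] at hcs
    have h2 : ∑ i, (xstar i - b i) * d1 i ≤ Real.sqrt (P * Dq) := by
      have habs : ∑ i, (xstar i - b i) * d1 i ≤ |∑ i, (xstar i - b i) * d1 i| := le_abs_self _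
      have : |∑ i, (xstar i - b i) * d1 i| = Real.sqrt ((∑ i, (xstar i - b i) * d1 i)^2) :=
        (Real.sqrt_sq_eq_abs _).symm
      rw [this] at habs
      exact le_trans habs (Real.sqrt_le_sqrt hcs)
    rw [Real.sqrt_mul hP0] at h2
    linarith [hineq1]
  -- Step C : sqrt Dq ≤ T / σ
  have hTσ0 : 0 ≤ T / σ := div_nonneg hT0 hσpos.le
  have hstepC : Real.sqrt Dq ≤ T / σ := by
    have e1 : Dq = d1 ⬝ᵥ d1 := by rw [hDq]; simp [dotProduct, sq]
    have hdd : Dq = wv ⬝ᵥ u := by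
      rw [e1, hd1, neg_dotProduct, dotProduct_neg, neg_neg,
        Matrix.dotProduct_mulVec, Matrix.vecMul_transpose, Matrix.mulVec_mulVec, hAwv,
        dotProduct_comm]
    have hrayw := hray wv
    rw [hAwv] at hrayw
    have hww0 : 0 ≤ wv ⬝ᵥ wv := Finset.sum_nonneg fun i _ => mul_self_nonneg _
    have hs0 : 0 ≤ wv ⬝ᵥ u := le_trans (mul_nonneg (sq_nonneg σ) hww0) hrayw
    have hcs := Finset.sum_mul_sq_le_sq_mul_sq Finset.univ wv u
    have hww : ∑ i, (wv i)^2 = wv ⬝ᵥ wv := by simp [dotProduct, sq]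
    have huu2 : ∑ i, (u i)^2 = u ⬝ᵥ u := by simp [dotProduct, sq]
    have hdot : ∑ i, wv i * u i = wv ⬝ᵥ u := rfl
    have huT : u ⬝ᵥ u ≤ T^2 := by
      have h1 : ∀ i, |u i| = if i ∈ Λ then |z i| else 0 := by
        intro i; by_cases h : i ∈ Λ <;> simp [hu, h]
      have h2 : ∑ i, |u i| = T := by
        rw [hTdef, hΛval]
        calc ∑ i, |u i| = ∑ i ∈ Finset.univ, (if i ∈ Λ then |z i| else 0) :=
              Finset.sum_congr rfl fun i _ => h1 i
        _ = ∑ i ∈ Λ, |z i| := by rw [Finset.sum_ite_mem, Finset.univ_inter]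
      have h3 := Finset.sum_sq_le_sq_sum_of_nonneg
        (f := fun i => |u i|) (s := Finset.univ) (fun i _ => abs_nonneg (u i))
      have h4 : ∑ i, |u i|^2 = u ⬝ᵥ u := by simp [dotProduct, sq_abs, sq]
      rw [h2, h4] at h3
      exact h3
    have hkey2 : σ^2 * Dq ≤ T^2 := by
      rw [hdd]
      rw [hdot, hww, huu2] at hcs
      have huu0 : 0 ≤ u ⬝ᵥ u := Finset.sum_nonneg fun i _ => mul_self_nonneg _
      rcases eq_or_lt_of_le hs0 with h | h
      · rw [← h, mul_zero]; positivity
      · have e1 : σ^2 * (wv ⬝ᵥ u)^2 ≤ σ^2 * ((wv ⬝ᵥ wv) * (u ⬝ᵥ u)) :=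
          mul_le_mul_of_nonneg_left hcs (sq_nonneg σ)
        have e2 : σ^2 * ((wv ⬝ᵥ wv) * (u ⬝ᵥ u)) = (σ^2 * (wv ⬝ᵥ wv)) * (u ⬝ᵥ u) := by ring
        have e3 : (σ^2 * (wv ⬝ᵥ wv)) * (u ⬝ᵥ u) ≤ (wv ⬝ᵥ u) * (u ⬝ᵥ u) :=
          mul_le_mul_of_nonneg_right hrayw huu0
        have e4 : (wv ⬝ᵥ u) * (u ⬝ᵥ u) ≤ (wv ⬝ᵥ u) * T^2 :=
          mul_le_mul_of_nonneg_left huT hs0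
        have e6 : σ^2 * (wv ⬝ᵥ u)^2 = (σ^2 * (wv ⬝ᵥ u)) * (wv ⬝ᵥ u) := by ring
        have e7 : (wv ⬝ᵥ u) * T^2 = T^2 * (wv ⬝ᵥ u) := by ring
        exact le_of_mul_le_mul_right (by linarith) h
    have hDqle : Dq ≤ (T/σ)^2 := by
      rw [div_pow, le_div_iff₀ (by positivity)]
      linarith [hkey2]
    calc Real.sqrt Dq ≤ Real.sqrt ((T/σ)^2) := Real.sqrt_le_sqrt hDqle
    _ = T/σ := Real.sqrt_sq hTσ0
  -- conclusion
  have hl2 : l2 (fun i => b i - xbar i) = Real.sqrt Pb := by rw [l2, hPb]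
  have hfin : γ * T ≤ (Real.sqrt Pb / σ) * T := by
    have h1 : Real.sqrt P * Real.sqrt Dq ≤ Real.sqrt Pb * (T/σ) :=
      mul_le_mul hstepA hstepC (Real.sqrt_nonneg _) (Real.sqrt_nonneg _)
    calc γ * T ≤ Real.sqrt P * Real.sqrt Dq := hstepB
    _ ≤ Real.sqrt Pb * (T/σ) := h1
    _ = (Real.sqrt Pb / σ) * T := by ring
  have hTz : T = 0 := by
    by_contra h
    have hTpos : 0 < T := lt_of_le_of_ne hT0 (Ne.symm h)
    have hlt : (Real.sqrt Pb / σ) * T < γ * T := by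
      apply mul_lt_mul_of_pos_right _ hTpos
      rw [hl2] at hthr
      exact hthr
    linarith
  refine ⟨hTz, ?_⟩
  have hzero : ∀ i ∈ Λ, z i = 0 := by
    have hsz : ∑ i ∈ Λ, |z i| = 0 := by rw [← hΛval, ← hTdef, hTz]
    intro i hi
    have := (Finset.sum_eq_zero_iff_of_nonneg fun i _ => abs_nonneg (z i)).1 hsz i hi
    exact abs_eq_zero.1 this
  have hsub : (Finset.univ.filter fun i => z i ≠ 0) ⊆ Λᶜ := by
    intro i hi
    rcases Finset.mem_filter.1 hi with ⟨_, hne⟩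
    simp only [Finset.mem_compl]
    intro hmem; exact hne (hzero i hmem)
  calc l0 z = (Finset.univ.filter fun i => z i ≠ 0).card := rfl
  _ ≤ Λᶜ.card := Finset.card_le_card hsub
  _ = m - (m - K) := by rw [Finset.card_compl, hΛcard, Fintype.card_fin]
  _ = K := Nat.sub_sub_self hK.le
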